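/- The brick polytope of an irreducible sorting network with n levels has dimension n−1. More generally, the brick polytope of a sorting network with n levels and p irreducible components has dimension n−p. -/

import Mathlib

open Finset
open scoped Classical Pointwise

namespace BrickP

/-! ### Networks and pseudoline arrangements

A network with `n` levels (labeled `0,…,n-1` from bottom to top) and `m` commutators
(labeled `0,…,m-1` from left to right) is encoded by a word `N : Fin m → Fin (n-1)`:
the `j`-th commutator joins levels `(N j).1` and `(N j).1 + 1`.
A pseudoline arrangement supported by `N` is encoded by its set `C` of crossings:
the word of adjacent transpositions read at the positions of `C` must be a reduced
expression of the longest element `w₀` of the symmetric group, i.e. its product is `w₀`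
and its length is `n.choose 2`.  The contacts are the commutators not in `C`. -/

/-- The adjacent transposition of `Fin n` exchanging the levels `i` and `i+1`. -/
def adjT (n : ℕ) (i : Fin (n - 1)) : Equiv.Perm (Fin n) :=
  Equiv.swap ⟨i.1, by have := i.2; omega⟩ ⟨i.1 + 1, by have := i.2; omega⟩

/-- The longest element of the symmetric group on `Fin n`: the order-reversing permutation. -/
def w0 (n : ℕ) : Equiv.Perm (Fin n) := Fin.revPerm

/-- `C` is the crossing set of a pseudoline arrangement supported by the network `N`. -/
def IsArr (n : ℕ) {m : ℕ} (N : Fin m → Fin (n - 1)) (C : Finset (Fin m)) : Prop :=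
  C.card = n.choose 2 ∧
    (((List.finRange m).filter (fun j => j ∈ C)).map (fun j => adjT n (N j))).prod = w0 n

instance (n : ℕ) {m : ℕ} (N : Fin m → Fin (n - 1)) : DecidablePred (IsArr n N) := fun C => by
  unfold IsArr; infer_instance

/-- `statePerm n N C t i` is the level occupied by the `i`-th pseudoline of the arrangement
with crossing set `C` after the first `t` commutators of the network `N`. -/
def statePerm (n : ℕ) {m : ℕ} (N : Fin m → Fin (n - 1)) (C : Finset (Fin m)) :
    ℕ → Equiv.Perm (Fin n)
  | 0 => 1
  | t + 1 =>
    (if h : t < m then (if (⟨t, h⟩ : Fin m) ∈ C then adjT n (N ⟨t, h⟩) else 1) else 1) *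
      statePerm n N C t

/-- The `j`-th commutator has another commutator at the same level gap to its right;
the brick of the network associated to `j` is the bounded cell whose left wall is `j`. -/
def IsBrick {n m : ℕ} (N : Fin m → Fin (n - 1)) (j : Fin m) : Prop :=
  ∃ j' : Fin m, j < j' ∧ N j' = N j

instance {n m : ℕ} (N : Fin m → Fin (n - 1)) : DecidablePred (IsBrick N) := fun j => by
  unfold IsBrick; infer_instance

/-- The `i`-th pseudoline of the arrangement `C` passes above the brick with left wall `j`
(equivalently, above the commutator `j`). -/
def Above (n : ℕ) {m : ℕ} (N : Fin m → Fin (n - 1)) (C : Finset (Fin m))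
    (i : Fin n) (j : Fin m) : Prop :=
  (N j).1 < (statePerm n N C (j.1 + 1) i).1

instance (n : ℕ) {m : ℕ} (N : Fin m → Fin (n - 1)) (C : Finset (Fin m)) (i : Fin n) (j : Fin m) :
    Decidable (Above n N C i j) := by unfold Above; infer_instance

/-- The brick vector of an arrangement: its `i`-th coordinate is the number of bricks of the
network lying below the `i`-th pseudoline. -/
noncomputable def brickVector (n : ℕ) {m : ℕ} (N : Fin m → Fin (n - 1)) (C : Finset (Fin m)) :
    Fin n → ℝ :=
  fun i => ((univ.filter (fun j : Fin m => IsBrick N j ∧ Above n N C i j)).card : ℝ)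

/-- The brick polytope of a network: the convex hull of the brick vectors of all pseudoline
arrangements supported by it. -/
noncomputable def brickPolytope (n : ℕ) {m : ℕ} (N : Fin m → Fin (n - 1)) : Set (Fin n → ℝ) :=
  convexHull ℝ {x | ∃ C, IsArr n N C ∧ brickVector n N C = x}

/-! ### The contact graph -/

/-- The source of the arc of the contact graph associated to the contact `j`:
the pseudoline passing above the contact. -/
def arcSrc (n : ℕ) {m : ℕ} (N : Fin m → Fin (n - 1)) (C : Finset (Fin m)) (j : Fin m) : Fin n :=
  (statePerm n N C (j.1 + 1))⁻¹ ⟨(N j).1 + 1, by have := (N j).2; omega⟩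

/-- The target of the arc of the contact graph associated to the contact `j`:
the pseudoline passing below the contact. -/
def arcTgt (n : ℕ) {m : ℕ} (N : Fin m → Fin (n - 1)) (C : Finset (Fin m)) (j : Fin m) : Fin n :=
  (statePerm n N C (j.1 + 1))⁻¹ ⟨(N j).1, by have := (N j).2; omega⟩

/-- The contact graph of an arrangement, as the multiset of its arcs (a directed multigraph
on the vertex set `Fin n`). -/
def contactMG (n : ℕ) {m : ℕ} (N : Fin m → Fin (n - 1)) (C : Finset (Fin m)) :
    Multiset (Fin n × Fin n) :=
  (univ.filter (fun j : Fin m => j ∉ C)).val.map (fun j => (arcSrc n N C j, arcTgt n N C j))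

/-- There is an arc from `a` to `b` in the contact graph of the arrangement `C`. -/
def ArcRel (n : ℕ) {m : ℕ} (N : Fin m → Fin (n - 1)) (C : Finset (Fin m)) (a b : Fin n) : Prop :=
  ∃ j : Fin m, j ∉ C ∧ arcSrc n N C j = a ∧ arcTgt n N C j = b

/-- `a` and `b` lie in the same connected component of the contact graph of `C`. -/
def ConnRel (n : ℕ) {m : ℕ} (N : Fin m → Fin (n - 1)) (C : Finset (Fin m)) (a b : Fin n) : Prop :=
  Relation.ReflTransGen (fun u v => ArcRel n N C u v ∨ ArcRel n N C v u) a b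

/-- A network is irreducible when the contact graphs of all supported arrangements
are connected. -/
def Irreducible (n : ℕ) {m : ℕ} (N : Fin m → Fin (n - 1)) : Prop :=
  ∀ C, IsArr n N C → ∀ a b : Fin n, ConnRel n N C a b

/-- The contact graph of the arrangement `C` is an acyclic directed multigraph. -/
def AcyclicArcs (n : ℕ) {m : ℕ} (N : Fin m → Fin (n - 1)) (C : Finset (Fin m)) : Prop :=
  ∀ a : Fin n, ¬ Relation.TransGen (ArcRel n N C) a a

/-! ### Polyhedral notions -/

/-- Dimension of a subset of `ℝⁿ`: the rank of the direction of its affine span. -/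
noncomputable def dimOf {n : ℕ} (s : Set (Fin n → ℝ)) : ℕ :=
  Module.finrank ℝ (affineSpan ℝ s).direction

/-- The cone positively spanned by a set of vectors. -/
def coneOf {n : ℕ} (S : Set (Fin n → ℝ)) : Set (Fin n → ℝ) :=
  {x | ∃ (k : ℕ) (c : Fin k → ℝ) (v : Fin k → Fin n → ℝ),
      (∀ i, 0 ≤ c i) ∧ (∀ i, v i ∈ S) ∧ x = ∑ i, c i • v i}

/-- Standard scalar product on `Fin n → ℝ`. -/
def dotp {n : ℕ} (u x : Fin n → ℝ) : ℝ := ∑ i, u i * x i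

/-- The face of `P` minimizing the linear form `⟨u, ·⟩`. -/
def minFace {n : ℕ} (P : Set (Fin n → ℝ)) (u : Fin n → ℝ) : Set (Fin n → ℝ) :=
  {x | x ∈ P ∧ ∀ y ∈ P, dotp u x ≤ dotp u y}

/-- `u` is a normal vector of a facet of `P` (facet = face of codimension 1), with the
convention that the facet is the subset of `P` minimizing `⟨u, ·⟩`. -/
def IsFacetNormal {n : ℕ} (P : Set (Fin n → ℝ)) (u : Fin n → ℝ) : Prop :=
  u ≠ 0 ∧ (minFace P u).Nonempty ∧ dimOf (minFace P u) + 1 = dimOf P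

/-- `F` is a nonempty face of dimension `k` of the convex set `P`. -/
def IsKFace {n : ℕ} (P : Set (Fin n → ℝ)) (k : ℕ) (F : Set (Fin n → ℝ)) : Prop :=
  IsExtreme ℝ P F ∧ Convex ℝ F ∧ F.Nonempty ∧ dimOf F = k

/-- The characteristic vector of a subset of coordinates. -/
def charVec {n : ℕ} (V : Finset (Fin n)) : Fin n → ℝ := fun i => if i ∈ V then 1 else 0

/-! ### Directed cuts -/

/-- The arcs of the contact graph of `C` crossing the vertex partition `(Vᶜ, V)`. -/
def cutArcs (n : ℕ) {m : ℕ} (N : Fin m → Fin (n - 1)) (C : Finset (Fin m)) (V : Finset (Fin n)) :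
    Set (Fin n × Fin n) :=
  {p | ArcRel n N C p.1 p.2 ∧ ((p.1 ∈ V ∧ p.2 ∉ V) ∨ (p.1 ∉ V ∧ p.2 ∈ V))}

/-- `(Vᶜ, V)` is a minimal directed cut of the contact graph of `C`, with sink set `V`:
all crossing arcs are directed towards `V` and the set of crossing arcs is
inclusion-minimal among edge cuts. -/
def MinDirCut (n : ℕ) {m : ℕ} (N : Fin m → Fin (n - 1)) (C : Finset (Fin m))
    (V : Finset (Fin n)) : Prop :=
  V.Nonempty ∧ V ≠ univ ∧ (∀ a b, ArcRel n N C a b → ¬(a ∈ V ∧ b ∉ V)) ∧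
    ∀ W : Finset (Fin n), W.Nonempty → W ≠ univ →
      cutArcs n N C W ⊆ cutArcs n N C V → cutArcs n N C W = cutArcs n N C V

/-! ### The simplicial complex `Δ(N)` and the face maps `Φ`, `Ψ` -/

/-- `γ` is a face of the simplicial complex `Δ(N)`: the network obtained by erasing the
commutators of `γ` is still sorting, i.e. some supported arrangement has all of `γ`
among its contacts. -/
def IsFaceOfCplx (n : ℕ) {m : ℕ} (N : Fin m → Fin (n - 1)) (γ : Finset (Fin m)) : Prop :=
  ∃ C, IsArr n N C ∧ Disjoint γ C

/-- `Φ` associates to `X ⊆ ℝⁿ` the set of commutators of `N` which are contacts in all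
supported arrangements whose brick vector lies in `X`. -/
def PhiMap (n : ℕ) {m : ℕ} (N : Fin m → Fin (n - 1)) (X : Set (Fin n → ℝ)) : Set (Fin m) :=
  {j | ∀ C, IsArr n N C → brickVector n N C ∈ X → j ∉ C}

/-- `Ψ` associates to a set `γ` of commutators of `N` the convex hull of the brick vectors
of the arrangements of `Arr(N|γ)`, i.e. whose contacts contain `γ`. -/
noncomputable def PsiMap (n : ℕ) {m : ℕ} (N : Fin m → Fin (n - 1)) (γ : Set (Fin m)) :
    Set (Fin n → ℝ) :=
  convexHull ℝ {x | ∃ C, IsArr n N C ∧ (∀ j ∈ γ, j ∉ C) ∧ brickVector n N C = x}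

/-- Same component relation in the contact graph of `C` with the arcs of `γ` removed. -/
def ConnRelAvoid (n : ℕ) {m : ℕ} (N : Fin m → Fin (n - 1)) (C : Finset (Fin m))
    (γ : Set (Fin m)) (a b : Fin n) : Prop :=
  Relation.ReflTransGen
    (fun u v =>
      (∃ j : Fin m, j ∉ C ∧ j ∉ γ ∧ arcSrc n N C j = u ∧ arcTgt n N C j = v) ∨
      (∃ j : Fin m, j ∉ C ∧ j ∉ γ ∧ arcSrc n N C j = v ∧ arcTgt n N C j = u)) a b

/-- One step of the quotient multigraph `Λ^#/(Λ^#∖γ^#)`: an arc of `γ^#` between the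
components of `a` and `b` in `Λ^#∖γ^#`. -/
def QStep (n : ℕ) {m : ℕ} (N : Fin m → Fin (n - 1)) (C : Finset (Fin m)) (γ : Set (Fin m))
    (a b : Fin n) : Prop :=
  ∃ a' b' : Fin n, ConnRelAvoid n N C γ a a' ∧
    (∃ j : Fin m, j ∉ C ∧ j ∈ γ ∧ arcSrc n N C j = a' ∧ arcTgt n N C j = b') ∧
    ConnRelAvoid n N C γ b' b

/-- A set `γ` of commutators of `N` is `k`-admissible. -/
def KAdmissible (n : ℕ) {m : ℕ} (N : Fin m → Fin (n - 1)) (γ : Set (Fin m)) (k : ℕ) : Prop :=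
  ∃ C, IsArr n N C ∧ (∀ j ∈ γ, j ∉ C) ∧
    {S : Set (Fin n) | ∃ a, S = {b | ConnRelAvoid n N C γ a b}}.ncard = n - k ∧
    ∀ a, ¬ Relation.TransGen (QStep n N C γ) a a

/-! ### Restrictions of networks -/

/-- The pseudoline of the arrangement `C` entering the commutator `j` from below. -/
def pLow (n : ℕ) {m : ℕ} (N : Fin m → Fin (n - 1)) (C : Finset (Fin m)) (j : Fin m) : Fin n :=
  (statePerm n N C j.1)⁻¹ ⟨(N j).1, by have := (N j).2; omega⟩

/-- The pseudoline of the arrangement `C` entering the commutator `j` from above. -/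
def pHigh (n : ℕ) {m : ℕ} (N : Fin m → Fin (n - 1)) (C : Finset (Fin m)) (j : Fin m) : Fin n :=
  (statePerm n N C j.1)⁻¹ ⟨(N j).1 + 1, by have := (N j).2; omega⟩

/-- `U` is a connected component of the contact graph of the arrangement `C`. -/
def IsComp (n : ℕ) {m : ℕ} (N : Fin m → Fin (n - 1)) (C : Finset (Fin m))
    (U : Finset (Fin n)) : Prop :=
  ∃ a : Fin n, U = univ.filter (fun b => ConnRel n N C a b)

/-- The commutators of `N` whose two incident pseudolines (w.r.t. the arrangement `C`)
both belong to `U`. -/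
def commsIn (n : ℕ) {m : ℕ} (N : Fin m → Fin (n - 1)) (C : Finset (Fin m))
    (U : Finset (Fin n)) : Finset (Fin m) :=
  univ.filter (fun j => pLow n N C j ∈ U ∧ pHigh n N C j ∈ U)

/-- The restriction of the network `N` to the curves of the pseudolines of `U`
(w.r.t. the arrangement `C`): it has `U.card` levels, its commutators are those of
`commsIn n N C U` in left-right order, and the level of such a commutator is the number
of curves of `U` passing below it. -/
noncomputable def restNet (n : ℕ) {m : ℕ} (N : Fin m → Fin (n - 1)) (C : Finset (Fin m))
    (U : Finset (Fin n)) (j' : Fin (commsIn n N C U).card) : Fin (U.card - 1) := by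
  refine ⟨(U.filter (fun u =>
      (statePerm n N C (((commsIn n N C U).orderIsoOfFin rfl j').1).1 u).1 <
        (N ((commsIn n N C U).orderIsoOfFin rfl j').1).1)).card, ?_⟩
  set j : Fin m := ((commsIn n N C U).orderIsoOfFin rfl j').1 with hj
  have hmem : j ∈ commsIn n N C U := ((commsIn n N C U).orderIsoOfFin rfl j').2
  rw [commsIn, Finset.mem_filter] at hmem
  obtain ⟨-, hL, hH⟩ := hmem
  have hlowlvl : (statePerm n N C j.1 (pLow n N C j)).1 = (N j).1 := by
    unfold pLow; rw [← Equiv.Perm.mul_apply, mul_inv_cancel, Equiv.Perm.one_apply]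
  have hhighlvl : (statePerm n N C j.1 (pHigh n N C j)).1 = (N j).1 + 1 := by
    unfold pHigh; rw [← Equiv.Perm.mul_apply, mul_inv_cancel, Equiv.Perm.one_apply]
  have hne : pLow n N C j ≠ pHigh n N C j := by
    intro h; rw [h, hhighlvl] at hlowlvl; omega
  have hsub : U.filter (fun u => (statePerm n N C j.1 u).1 < (N j).1)
      ⊆ (U.erase (pLow n N C j)).erase (pHigh n N C j) := by
    intro u hu
    rw [Finset.mem_filter] at hu
    rw [Finset.mem_erase, Finset.mem_erase]
    refine ⟨fun h => ?_, fun h => ?_, hu.1⟩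
    · rw [h] at hu; omega
    · rw [h] at hu; omega
  have hcard := Finset.card_le_card hsub
  rw [Finset.card_erase_of_mem (Finset.mem_erase.mpr ⟨hne.symm, hH⟩),
    Finset.card_erase_of_mem hL] at hcard
  have hU2 : 2 ≤ U.card := Finset.one_lt_card.mpr ⟨_, hL, _, hH, hne⟩
  omega

/-- The indices, in the restricted network, of the commutators of `γ` belonging to the
restriction. -/
def restIdx (n : ℕ) {m : ℕ} (N : Fin m → Fin (n - 1)) (C : Finset (Fin m)) (U : Finset (Fin n))
    (γ : Finset (Fin m)) : Finset (Fin (commsIn n N C U).card) :=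
  univ.filter (fun j' => ((commsIn n N C U).orderIsoOfFin rfl j').1 ∈ γ)


/-! ### Kernels of networks, alternating networks, and the polygon of a word -/

/-- The commutators of `N` surviving in the `k`-kernel of `N` (obtained by erasing the
first `k` and last `k` levels together with all commutators incident to them). -/
def kernelComms (n : ℕ) {m : ℕ} (N : Fin m → Fin (n - 1)) (k : ℕ) : Finset (Fin m) :=
  univ.filter (fun j => k ≤ (N j).1 ∧ (N j).1 + k < n - 1)

/-- The `k`-kernel of the network `N`: a network with `n - 2k` levels. -/
def kernelNet (n : ℕ) {m : ℕ} (N : Fin m → Fin (n - 1)) (k : ℕ) :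
    Fin (kernelComms n N k).card → Fin (n - 2 * k - 1) :=
  fun j' => ⟨(N ((kernelComms n N k).orderIsoOfFin rfl j').1).1 - k, by
    have h := ((kernelComms n N k).orderIsoOfFin rfl j').2
    have h2 := (Finset.mem_filter.mp h).2
    omega⟩

/-- The commutator `j` is adjacent to the level `ℓ`. -/
def Touches {n m : ℕ} (N : Fin m → Fin (n - 1)) (ℓ : ℕ) (j : Fin m) : Prop :=
  (N j).1 = ℓ ∨ (N j).1 + 1 = ℓ

/-- The network `N` is alternating: the commutators adjacent to each intermediate level are
alternatively located above and below it. -/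
def IsAlternating {n m : ℕ} (N : Fin m → Fin (n - 1)) : Prop :=
  ∀ ℓ : ℕ, 0 < ℓ → ℓ + 1 < n → ∀ j j' : Fin m, j < j' →
    Touches N ℓ j → Touches N ℓ j' → (∀ j'', j < j'' → j'' < j' → ¬ Touches N ℓ j'') →
    N j ≠ N j'

/-- The `i`-th pseudoline of the arrangement `C` touches the level `ℓ` somewhere. -/
def TouchesLevel (n : ℕ) {m : ℕ} (N : Fin m → Fin (n - 1)) (C : Finset (Fin m))
    (i : Fin n) (ℓ : ℕ) : Prop :=
  ∃ t, t ≤ m ∧ (statePerm n N C t i).1 = ℓ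

/-- `M` is the reduced alternating sorting network `N_x` associated to the word
`x ∈ {a,b}^{n-2}` (where `a` is encoded by `true` and `b` by `false`): it is reduced
(it has `n.choose 2` commutators, all of which are crossings of its unique supported
pseudoline arrangement), alternating, and for each `i` its `(i+1)`-st pseudoline touches
the top level if `x i = a` and the bottom level if `x i = b`. -/
def IsNetworkOfWord (n : ℕ) {m : ℕ} (M : Fin m → Fin (n - 1)) (x : Fin (n - 2) → Bool) : Prop :=
  m = n.choose 2 ∧ IsArr n M Finset.univ ∧ IsAlternating M ∧
    ∀ i : Fin (n - 2),
      (x i = true →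
        TouchesLevel n M Finset.univ ⟨i.1 + 1, by have := i.2; omega⟩ (n - 1)) ∧
      (x i = false →
        TouchesLevel n M Finset.univ ⟨i.1 + 1, by have := i.2; omega⟩ 0)

/-- The position of the vertex `v` of the polygon `P_x` in the cyclic (counterclockwise)
order along the boundary of `P_x`: first `p_1`, then the vertices below the horizontal
axis from left to right, then `p_n`, then the vertices above the axis from right to left. -/
def cpos (n : ℕ) (x : Fin (n - 2) → Bool) (v : Fin n) : ℕ :=
  if v.1 = 0 then 0
  else if v.1 = n - 1 then (univ.filter (fun i : Fin (n - 2) => x i = false)).card + 1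
  else if h : v.1 = 0 ∨ v.1 = n - 1 then 0
  else if x ⟨v.1 - 1, by have := v.2; omega⟩ = false then
    (univ.filter (fun i : Fin (n - 2) => i.1 < v.1 - 1 ∧ x i = false)).card + 1
  else
    (univ.filter (fun i : Fin (n - 2) => x i = false)).card + 2 +
      (univ.filter (fun i : Fin (n - 2) => v.1 - 1 < i.1 ∧ x i = true)).card

/-- `c` lies strictly between `a` and `b`. -/
def Btw (a b c : ℕ) : Prop := min a b < c ∧ c < max a b

/-- The diagonals `d` and `e` of the polygon `P_x` cross (in their interior): exactly one
endpoint of `e` lies on each side of `d`. -/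
def CrossesIn (n : ℕ) (x : Fin (n - 2) → Bool) (d e : Fin n × Fin n) : Prop :=
  (Btw (cpos n x d.1) (cpos n x d.2) (cpos n x e.1) ∧
      ¬ Btw (cpos n x d.1) (cpos n x d.2) (cpos n x e.2)) ∨
  (¬ Btw (cpos n x d.1) (cpos n x d.2) (cpos n x e.1) ∧
      Btw (cpos n x d.1) (cpos n x d.2) (cpos n x e.2))

/-- `d` is an internal diagonal of the polygon `P_x`: its endpoints are distinct and
non-consecutive on the boundary. -/
def IsInternal (n : ℕ) (x : Fin (n - 2) → Bool) (d : Fin n × Fin n) : Prop :=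
  d.1 ≠ d.2 ∧ (cpos n x d.1 + 1) % n ≠ cpos n x d.2 ∧ (cpos n x d.2 + 1) % n ≠ cpos n x d.1

/-- The label of the commutator `j` of a reduced network: the pair of indices of the two
pseudolines of the unique supported arrangement which cross at `j` (smallest first). -/
def commLabel (n : ℕ) {m : ℕ} (M : Fin m → Fin (n - 1)) (j : Fin m) : Fin n × Fin n :=
  (pLow n M Finset.univ j, pHigh n M Finset.univ j)

/-! ### Multitriangulations: valid sequences and the sets `D(σ)` -/

/-- The sequence `0^k σ 0^k ∈ {0,1}^n` obtained by appending `k` zeros before and after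
`σ ∈ {0,1}^(n-2k)` (`1` is encoded by `true` and `0` by `false`). -/
def extSeq (n k : ℕ) (σ : Fin (n - 2 * k) → Bool) (t : Fin n) : Bool :=
  if h : k ≤ t.1 ∧ t.1 < k + (n - 2 * k) then σ ⟨t.1 - k, by omega⟩ else false

/-- The positions of the zeros of the extended sequence `0^k σ 0^k`. -/
def zeroSet (n k : ℕ) (σ : Fin (n - 2 * k) → Bool) : Finset (Fin n) :=
  univ.filter (fun t => extSeq n k σ t = false)

/-- The set `D(σ)` of edges `[ζ_i(σ), ζ_{i+k}(σ)]` of the `n`-gon, where `ζ_i(σ)` denotes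
the position of the `i`-th zero of `0^k σ 0^k`. -/
def DsetP (n k : ℕ) (σ : Fin (n - 2 * k) → Bool) (p : Fin n × Fin n) : Prop :=
  ∃ i : Fin (zeroSet n k σ).card, ∃ hik : i.1 + k < (zeroSet n k σ).card,
    p = (((zeroSet n k σ).orderIsoOfFin rfl i).1,
         ((zeroSet n k σ).orderIsoOfFin rfl ⟨i.1 + k, hik⟩).1)

/-- A sequence of `{0,1}^q` is `k`-valid if it is neither `0^q` nor `1^q` and contains no
factor `1 0^r 1` with `r ≥ k`. -/
def KValid (q k : ℕ) (σ : Fin q → Bool) : Prop :=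
  (∃ i, σ i = true) ∧ (∃ i, σ i = false) ∧
    ¬ ∃ i j : Fin q, i < j ∧ σ i = true ∧ σ j = true ∧
        (∀ t, i < t → t < j → σ t = false) ∧ k ≤ j.1 - i.1 - 1

/-! ### The simplicial complex `Δ_n^k` of multitriangulations -/

/-- `p` encodes a `k`-relevant diagonal of a convex `q`-gon with vertices `0,…,q-1` in
cyclic order: it has at least `k` vertices of the polygon (strictly) on each side. -/
def IsRelevantDiag (q k : ℕ) (p : Fin q × Fin q) : Prop :=
  p.1.1 < p.2.1 ∧ p.1.1 + k + 1 ≤ p.2.1 ∧ k + p.2.1 + 1 ≤ q + p.1.1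

/-- Two diagonals of the convex `q`-gon cross. -/
def DiagCross {q : ℕ} (p e : Fin q × Fin q) : Prop :=
  (p.1.1 < e.1.1 ∧ e.1.1 < p.2.1 ∧ p.2.1 < e.2.1) ∨
  (e.1.1 < p.1.1 ∧ p.1.1 < e.2.1 ∧ e.2.1 < p.2.1)

/-- `γ` is a face of the simplicial complex `Δ_q^k`: a `(k+1)`-crossing-free set of
`k`-relevant diagonals of the convex `q`-gon. -/
def IsFaceDelta (q k : ℕ) (γ : Finset (Fin q × Fin q)) : Prop :=
  (∀ p ∈ γ, IsRelevantDiag q k p) ∧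
    ∀ S ⊆ γ, S.card = k + 1 → ¬ (∀ p ∈ S, ∀ e ∈ S, p ≠ e → DiagCross p e)



/-! The arrangements supported by `N` are the facets of a subword complex, and any two of them
are joined by a sequence of flips (induction on the length of the word, deleting its last
letter). A flip exchanges a contact `j` between two lines `a` above `b` with their unique
crossing `u`; between `u` and `j` the two lines swap their paths, so the brick vector moves by
`k (e_b - e_a)`, with `k > 0` the number of bricks between the two lines there, while the
components of the contact graph are unchanged. Hence the differences of brick vectors span
exactly the vectors `e_a - e_b` with `a` and `b` in a common component, a space of dimension `n`
minus the number of components. -/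

open Equiv

section Transpositions

variable {n : ℕ}

def lowLevel (i : Fin (n - 1)) : Fin n := ⟨i.1, by omega⟩

def highLevel (i : Fin (n - 1)) : Fin n := ⟨i.1 + 1, by omega⟩

@[simp] lemma val_lowLevel (i : Fin (n - 1)) : (lowLevel i).1 = i.1 := rfl

@[simp] lemma val_highLevel (i : Fin (n - 1)) : (highLevel i).1 = i.1 + 1 := rfl

lemma adjT_eq_swap (i : Fin (n - 1)) : adjT n i = swap (lowLevel i) (highLevel i) := rfl

lemma lowLevel_ne_highLevel (i : Fin (n - 1)) : lowLevel i ≠ highLevel i := by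
  simp [Fin.ext_iff]

lemma adjT_mul_self (i : Fin (n - 1)) : adjT n i * adjT n i = 1 := swap_mul_self _ _

lemma adjT_inv (i : Fin (n - 1)) : (adjT n i)⁻¹ = adjT n i := swap_inv _ _

lemma val_adjT_apply (i : Fin (n - 1)) (x : Fin n) :
    (adjT n i x).1 = if x.1 = i.1 then i.1 + 1 else if x.1 = i.1 + 1 then i.1 else x.1 := by
  rw [adjT_eq_swap, swap_apply_def]
  simp only [Fin.ext_iff, val_lowLevel, val_highLevel]
  split_ifs <;> rfl

lemma adjT_mul_eq_mul_swap (i : Fin (n - 1)) (w : Perm (Fin n)) :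
    adjT n i * w = w * swap (w⁻¹ (lowLevel i)) (w⁻¹ (highLevel i)) := by
  rw [swap_apply_apply, adjT_eq_swap]
  simp [mul_assoc]

end Transpositions

section StatePerm

variable {n m : ℕ} {N : Fin m → Fin (n - 1)} {C : Finset (Fin m)}

lemma statePerm_succ_of_lt {t : ℕ} (ht : t < m) :
    statePerm n N C (t + 1) =
      (if (⟨t, ht⟩ : Fin m) ∈ C then adjT n (N ⟨t, ht⟩) else 1) * statePerm n N C t := by
  rw [statePerm, dif_pos ht]

lemma statePerm_succ_of_le {t : ℕ} (ht : m ≤ t) : statePerm n N C (t + 1) = statePerm n N C t := by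
  rw [statePerm, dif_neg (by omega), one_mul]

lemma statePerm_succ_of_mem {j : Fin m} (hj : j ∈ C) :
    statePerm n N C (j + 1) = adjT n (N j) * statePerm n N C j := by
  rw [statePerm_succ_of_lt j.2, if_pos hj]

lemma statePerm_succ_of_not_mem {j : Fin m} (hj : j ∉ C) :
    statePerm n N C (j + 1) = statePerm n N C j := by
  rw [statePerm_succ_of_lt j.2, if_neg hj, one_mul]

lemma statePerm_castSucc {N : Fin (m + 1) → Fin (n - 1)} {C : Finset (Fin (m + 1))}
    {E : Finset (Fin m)} (hEC : ∀ j, j ∈ E ↔ Fin.castSucc j ∈ C) :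
    ∀ t ≤ m, statePerm n (N ∘ Fin.castSucc) E t = statePerm n N C t
  | 0, _ => rfl
  | t + 1, ht => by
    rw [statePerm_succ_of_lt (by omega), statePerm_succ_of_lt (by omega),
      statePerm_castSucc hEC t (by omega)]
    simp only [Function.comp_apply, hEC]
    rfl

def dropLast (C : Finset (Fin (m + 1))) : Finset (Fin m) := univ.filter fun j => Fin.castSucc j ∈ C

@[simp] lemma mem_dropLast {C : Finset (Fin (m + 1))} {j : Fin m} :
    j ∈ dropLast C ↔ Fin.castSucc j ∈ C := by
  simp [dropLast]

lemma statePerm_dropLast {N : Fin (m + 1) → Fin (n - 1)} {C : Finset (Fin (m + 1))} (t : ℕ)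
    (ht : t ≤ m) : statePerm n (N ∘ Fin.castSucc) (dropLast C) t = statePerm n N C t :=
  statePerm_castSucc (fun _ => mem_dropLast) t ht

/-- `statePerm` composes the letters on the left, hence the inverse. -/
lemma prod_crossings_eq_inv_statePerm :
    ∀ {m : ℕ} (N : Fin m → Fin (n - 1)) (C : Finset (Fin m)),
      (((List.finRange m).filter (fun j => j ∈ C)).map (fun j => adjT n (N j))).prod =
        (statePerm n N C m)⁻¹
  | 0, _, _ => by simp [statePerm]
  | m + 1, N, C => by
    have ih := prod_crossings_eq_inv_statePerm (N ∘ Fin.castSucc) (dropLast C)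
    rw [statePerm_dropLast m le_rfl] at ih
    rw [statePerm_succ_of_lt (Nat.lt_succ_self m), List.finRange_succ_last, List.filter_append,
      List.filter_map, List.map_append, List.map_map, List.prod_append, mul_inv_rev]
    simp only [Function.comp_def, mem_dropLast] at ih ⊢
    rw [ih]
    congr 1
    have hlast : (⟨m, Nat.lt_succ_self m⟩ : Fin (m + 1)) = Fin.last m := rfl
    rw [hlast]
    split_ifs with h <;> simp [h, adjT_inv]

end StatePerm

section Inversions

variable {n : ℕ}

def inversions (w : Perm (Fin n)) : Finset (Fin n × Fin n) := {p | p.1 < p.2 ∧ w p.2 < w p.1}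

def nInv (w : Perm (Fin n)) : ℕ := #(inversions w)

@[simp] lemma nInv_one : nInv (1 : Perm (Fin n)) = 0 := by
  rw [nInv, card_eq_zero, inversions, filter_eq_empty_iff]
  exact fun p _ h => lt_asymm h.1 h.2

lemma nInv_w0 : nInv (w0 n) = n.choose 2 := by
  have h := Fintype.card_product_filter_lt (α := Fin n)
  rw [Fintype.card_fin] at h
  rw [← h, nInv, inversions]
  congr 1
  ext p
  simp [w0]

/-- Left multiplication by `adjT n i` exchanges the values `i` and `i + 1`, so it creates or
removes exactly the inversion `(w⁻¹ i, w⁻¹ (i + 1))`. -/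
lemma nInv_adjT_mul_of_lt {i : Fin (n - 1)} {w : Perm (Fin n)}
    (h : w⁻¹ (lowLevel i) < w⁻¹ (highLevel i)) : nInv (adjT n i * w) = nInv w + 1 := by
  set u := w⁻¹ (lowLevel i)
  set v := w⁻¹ (highLevel i)
  have hwu : w u = lowLevel i := by simp [u]
  have hwv : w v = highLevel i := by simp [v]
  have hinv : inversions (adjT n i * w) = insert (u, v) (inversions w) := by
    ext ⟨x, y⟩
    simp only [inversions, mem_filter, mem_univ, true_and, mem_insert, Prod.mk.injEq,
      Perm.mul_apply, Fin.lt_def, val_adjT_apply]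
    have hx : w x = lowLevel i ↔ x = u := by simp [u, Equiv.eq_symm_apply]
    have hy : w y = highLevel i ↔ y = v := by simp [v, Equiv.eq_symm_apply]
    have hx' : w x = highLevel i ↔ x = v := by simp [v, Equiv.eq_symm_apply]
    have hy' : w y = lowLevel i ↔ y = u := by simp [u, Equiv.eq_symm_apply]
    simp only [Fin.ext_iff, val_lowLevel, val_highLevel] at hx hy hx' hy'
    rw [Fin.lt_def] at h
    have hu : (w u).1 = i.1 := congrArg Fin.val hwu
    have hv : (w v).1 = i.1 + 1 := congrArg Fin.val hwv
    split_ifs <;> grind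
  rw [nInv, hinv, card_insert_of_notMem, nInv]
  simp only [inversions, mem_filter, mem_univ, true_and, hwu, hwv, not_and, not_lt]
  exact fun _ => Fin.le_def.mpr (by simp)

lemma nInv_adjT_mul_of_gt {i : Fin (n - 1)} {w : Perm (Fin n)}
    (h : w⁻¹ (highLevel i) < w⁻¹ (lowLevel i)) : nInv (adjT n i * w) + 1 = nInv w := by
  conv_rhs => rw [← one_mul w, ← adjT_mul_self i, mul_assoc]
  refine (nInv_adjT_mul_of_lt ?_).symm
  simpa [mul_inv_rev, adjT_inv, adjT_eq_swap] using h

lemma nInv_adjT_mul_cases (i : Fin (n - 1)) (w : Perm (Fin n)) :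
    nInv (adjT n i * w) = nInv w + 1 ∨ nInv (adjT n i * w) + 1 = nInv w :=
  (lt_or_gt_of_ne (w⁻¹.injective.ne (lowLevel_ne_highLevel i))).imp nInv_adjT_mul_of_lt
    nInv_adjT_mul_of_gt

end Inversions

section Facets

variable {n m : ℕ} {N : Fin m → Fin (n - 1)} {C : Finset (Fin m)} {π : Perm (Fin n)}

/-- `C` is a facet of the subword complex of the word `N` and the permutation `π`: the letters
of `N` at the positions of `C` form a reduced expression of `π`. -/
def IsFacet (N : Fin m → Fin (n - 1)) (π : Perm (Fin n)) (C : Finset (Fin m)) : Prop :=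
  #C = nInv π ∧ statePerm n N C m = π

lemma isArr_iff_isFacet : IsArr n N C ↔ IsFacet N (w0 n) C := by
  have hw0 : (w0 n)⁻¹ = w0 n := Fin.revPerm_symm
  rw [IsArr, IsFacet, nInv_w0, prod_crossings_eq_inv_statePerm, inv_eq_iff_eq_inv, hw0, eq_comm]

lemma card_filter_lt_succ (C : Finset (Fin m)) (j : Fin m) :
    #{i ∈ C | i.1 < j.1 + 1} = #{i ∈ C | i.1 < j.1} + if j ∈ C then 1 else 0 := by
  have h : {i ∈ C | i.1 < j.1 + 1} = {i ∈ C | i.1 < j.1} ∪ {i ∈ C | i = j} := by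
    ext i
    simp only [mem_filter, mem_union, Fin.ext_iff, ← and_or_left]
    exact and_congr_right fun _ => by omega
  rw [h, card_union_of_disjoint (disjoint_filter.2 fun i _ h1 h2 => by rw [h2] at h1; omega),
    filter_eq']
  split_ifs <;> simp

lemma nInv_statePerm_succ_le (t : ℕ) :
    nInv (statePerm n N C (t + 1)) + #{j ∈ C | j.1 < t} ≤
      nInv (statePerm n N C t) + #{j ∈ C | j.1 < t + 1} := by
  rcases lt_or_ge t m with ht | ht
  · obtain ⟨j, rfl⟩ : ∃ j : Fin m, j.1 = t := ⟨⟨t, ht⟩, rfl⟩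
    rw [card_filter_lt_succ]
    by_cases hj : j ∈ C
    · rw [statePerm_succ_of_mem hj, if_pos hj]
      rcases nInv_adjT_mul_cases (N j) (statePerm n N C j) with h | h <;> omega
    · rw [statePerm_succ_of_not_mem hj, if_neg hj, add_zero]
  · have hC : ∀ s ≥ t, {j ∈ C | j.1 < s} = C := fun s hs => filter_true_of_mem fun j _ => by omega
    rw [statePerm_succ_of_le ht, hC t le_rfl, hC (t + 1) (by omega)]

lemma antitone_nInv_statePerm_sub :
    Antitone fun t => (nInv (statePerm n N C t) : ℤ) - #{j ∈ C | j.1 < t} :=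
  antitone_nat_of_succ_le fun t => by
    have := nInv_statePerm_succ_le (N := N) (C := C) t
    omega

lemma nInv_statePerm_le (t : ℕ) : nInv (statePerm n N C t) ≤ #{j ∈ C | j.1 < t} := by
  have := antitone_nInv_statePerm_sub (N := N) (C := C) (Nat.zero_le t)
  simp only [statePerm, nInv_one, Nat.cast_zero, Nat.not_lt_zero, filter_false, card_empty,
    sub_self, sub_nonpos, Nat.cast_le] at this
  exact this

lemma nInv_statePerm_le_card : nInv (statePerm n N C m) ≤ #C := by
  simpa only [filter_true_of_mem fun (j : Fin m) _ => j.2] using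
    nInv_statePerm_le (N := N) (C := C) m

lemma IsFacet.nInv_statePerm (hC : IsFacet N π C) {t : ℕ} (ht : t ≤ m) :
    nInv (statePerm n N C t) = #{j ∈ C | j.1 < t} := by
  have hm := antitone_nInv_statePerm_sub (N := N) (C := C) ht
  simp only [filter_true_of_mem fun (j : Fin m) _ => j.2, hC.2, hC.1] at hm
  have := nInv_statePerm_le (N := N) (C := C) t
  omega

/-- In a reduced word every letter is an ascent: the two lines entering a crossing of a facet
enter in increasing order. -/
lemma IsFacet.pLow_lt_pHigh (hC : IsFacet N π C) {j : Fin m} (hj : j ∈ C) :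
    pLow n N C j < pHigh n N C j := by
  have h := hC.nInv_statePerm (Nat.succ_le_of_lt j.2)
  rw [card_filter_lt_succ, if_pos hj, ← hC.nInv_statePerm j.2.le, statePerm_succ_of_mem hj] at h
  by_contra hlt
  have hgt := lt_of_le_of_ne (not_lt.1 hlt)
    ((statePerm n N C j)⁻¹.injective.ne (lowLevel_ne_highLevel (N j))).symm
  have := nInv_adjT_mul_of_gt hgt
  omega

end Facets

section Crossings

variable {n m : ℕ} {N : Fin m → Fin (n - 1)} {C : Finset (Fin m)}

lemma swap_eq_swap_iff {α : Type*} [DecidableEq α] {a b c d : α} (hab : a ≠ b) :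
    swap a b = swap c d ↔ (a = c ∧ b = d) ∨ (a = d ∧ b = c) := by
  refine ⟨fun h => ?_, by rintro (⟨rfl, rfl⟩ | ⟨rfl, rfl⟩) <;> simp [swap_comm]⟩
  have ha : swap c d a = b := by rw [← h, swap_apply_left]
  rw [swap_apply_def] at ha
  split_ifs at ha with hac had
  · exact Or.inl ⟨hac, ha.symm⟩
  · exact Or.inr ⟨had, ha.symm⟩
  · exact absurd ha hab

def lineSwap (N : Fin m → Fin (n - 1)) (C : Finset (Fin m)) (j : Fin m) : Perm (Fin n) :=
  swap (pLow n N C j) (pHigh n N C j)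

lemma statePerm_apply_pLow (j : Fin m) : statePerm n N C j (pLow n N C j) = lowLevel (N j) :=
  (statePerm n N C j).apply_symm_apply _

lemma statePerm_apply_pHigh (j : Fin m) : statePerm n N C j (pHigh n N C j) = highLevel (N j) :=
  (statePerm n N C j).apply_symm_apply _

lemma pLow_ne_pHigh (j : Fin m) : pLow n N C j ≠ pHigh n N C j :=
  (statePerm n N C j)⁻¹.injective.ne (lowLevel_ne_highLevel (N j))

lemma adjT_mul_statePerm (j : Fin m) :
    adjT n (N j) * statePerm n N C j = statePerm n N C j * lineSwap N C j :=
  adjT_mul_eq_mul_swap _ _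

lemma statePerm_succ_eq_mul_lineSwap {j : Fin m} (hj : j ∈ C) :
    statePerm n N C (j + 1) = statePerm n N C j * lineSwap N C j := by
  rw [statePerm_succ_of_mem hj, adjT_mul_statePerm]

lemma statePerm_succ_apply_pLow {j : Fin m} (hj : j ∈ C) :
    statePerm n N C (j + 1) (pLow n N C j) = highLevel (N j) := by
  rw [statePerm_succ_eq_mul_lineSwap hj, Perm.mul_apply, lineSwap, swap_apply_left,
    statePerm_apply_pHigh]

lemma statePerm_succ_apply_pHigh {j : Fin m} (hj : j ∈ C) :
    statePerm n N C (j + 1) (pHigh n N C j) = lowLevel (N j) := by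
  rw [statePerm_succ_eq_mul_lineSwap hj, Perm.mul_apply, lineSwap, swap_apply_right,
    statePerm_apply_pLow]

lemma lt_val_statePerm_succ_iff_or (t : ℕ) (x : Fin n) (L : ℕ) :
    (L < (statePerm n N C t x).1 ↔ L < (statePerm n N C (t + 1) x).1) ∨
      ∃ j : Fin m, j.1 = t ∧ (N j).1 = L := by
  rcases lt_or_ge t m with ht | ht
  · obtain ⟨j, rfl⟩ : ∃ j : Fin m, j.1 = t := ⟨⟨t, ht⟩, rfl⟩
    by_cases hj : j ∈ C
    · rw [statePerm_succ_of_mem hj, Perm.mul_apply, val_adjT_apply]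
      by_cases hL : (N j).1 = L
      · exact Or.inr ⟨j, rfl, hL⟩
      · left; split_ifs <;> omega
    · rw [statePerm_succ_of_not_mem hj]; exact Or.inl Iff.rfl
  · rw [statePerm_succ_of_le ht]; exact Or.inl Iff.rfl

lemma exists_val_eq_of_not_lt_val_statePerm_iff (x : Fin n) (L : ℕ) {t₀ t₁ : ℕ} (h : t₀ ≤ t₁)
    (hL : ¬(L < (statePerm n N C t₀ x).1 ↔ L < (statePerm n N C t₁ x).1)) :
    ∃ j : Fin m, t₀ ≤ j.1 ∧ j.1 < t₁ ∧ (N j).1 = L := by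
  induction t₁, h using Nat.le_induction with
  | base => exact absurd Iff.rfl hL
  | succ t ht ih =>
    by_cases hiff : L < (statePerm n N C t₀ x).1 ↔ L < (statePerm n N C t x).1
    · rcases lt_val_statePerm_succ_iff_or (N := N) (C := C) t x L with h' | ⟨j, rfl, hj⟩
      · exact absurd (hiff.trans h') hL
      · exact ⟨j, ht, Nat.lt_succ_self _, hj⟩
    · obtain ⟨j, h₀, h₁, hj⟩ := ih hiff
      exact ⟨j, h₀, by omega, hj⟩

/-- Whether the gap of the two lines stays or moves between `lo` and `hi`, some later commutator
of the gap of `lo` closes the region they bound. -/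
lemma isBrick_of_statePerm_eq {a b : Fin n} {lo hi : Fin m} (hlt : lo < hi)
    (hb₀ : statePerm n N C (lo + 1) b = lowLevel (N lo))
    (ha₀ : statePerm n N C (lo + 1) a = highLevel (N lo))
    (hb₁ : statePerm n N C hi b = lowLevel (N hi)) (ha₁ : statePerm n N C hi a = highLevel (N hi)) :
    IsBrick N lo := by
  have hle : lo.1 + 1 ≤ hi.1 := hlt
  rcases lt_trichotomy (N lo) (N hi) with h | h | h
  · obtain ⟨j, h₀, h₁, hj⟩ := exists_val_eq_of_not_lt_val_statePerm_iff b (N lo).1 hle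
      (by rw [hb₀, hb₁, val_lowLevel, val_lowLevel]; have := Fin.lt_def.1 h; omega)
    exact ⟨j, by rw [Fin.lt_def]; omega, Fin.ext hj⟩
  · exact ⟨hi, hlt, h.symm⟩
  · obtain ⟨j, h₀, h₁, hj⟩ := exists_val_eq_of_not_lt_val_statePerm_iff a (N lo).1 hle
      (by rw [ha₀, ha₁, val_highLevel, val_highLevel]; have := Fin.lt_def.1 h; omega)
    exact ⟨j, by rw [Fin.lt_def]; omega, Fin.ext hj⟩

lemma exists_crossing_of_lt_of_lt {x y : Fin n} {t₀ t₁ : ℕ} (h : t₀ ≤ t₁)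
    (h₀ : statePerm n N C t₀ x < statePerm n N C t₀ y)
    (h₁ : statePerm n N C t₁ y < statePerm n N C t₁ x) :
    ∃ j ∈ C, t₀ ≤ j.1 ∧ j.1 < t₁ ∧ pLow n N C j = x ∧ pHigh n N C j = y := by
  induction t₁, h using Nat.le_induction with
  | base => exact absurd h₀ (lt_asymm h₁)
  | succ t ht ih =>
    rcases lt_or_gt_of_ne ((statePerm n N C t).injective.ne
      (show y ≠ x by rintro rfl; exact lt_irrefl _ h₀)) with h | h
    · obtain ⟨j, hj, h₀, h₁, hx, hy⟩ := ih h
      exact ⟨j, hj, h₀, by omega, hx, hy⟩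
    rcases lt_or_ge t m with htm | htm
    · obtain ⟨j, rfl⟩ : ∃ j : Fin m, j.1 = t := ⟨⟨t, htm⟩, rfl⟩
      by_cases hj : j ∈ C
      · rw [statePerm_succ_of_mem hj, Perm.mul_apply, Perm.mul_apply, Fin.lt_def,
          val_adjT_apply, val_adjT_apply] at h₁
        rw [Fin.lt_def] at h
        have hx : statePerm n N C j x = lowLevel (N j) := by
          ext; rw [val_lowLevel]; split_ifs at h₁ <;> omega
        have hy : statePerm n N C j y = highLevel (N j) := by
          ext; rw [val_highLevel]; split_ifs at h₁ <;> omega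
        exact ⟨j, hj, ht, Nat.lt_succ_self _, Perm.inv_eq_iff_eq.2 hx.symm,
          Perm.inv_eq_iff_eq.2 hy.symm⟩
      · rw [statePerm_succ_of_not_mem hj] at h₁
        exact absurd h (lt_asymm h₁)
    · rw [statePerm_succ_of_le htm] at h₁
      exact absurd h (lt_asymm h₁)

lemma IsFacet.exists_crossing (hC : IsFacet N (w0 n) C) {x y : Fin n} (hxy : x < y) :
    ∃ j ∈ C, pLow n N C j = x ∧ pHigh n N C j = y := by
  obtain ⟨j, hj, -, -, h⟩ := exists_crossing_of_lt_of_lt (N := N) (C := C) (Nat.zero_le m)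
    (by simpa [statePerm] using hxy) (by simpa [hC.2, w0] using hxy)
  exact ⟨j, hj, h⟩

/-- A facet of `w0` has `n.choose 2` crossings and every pair of lines crosses, so no pair
crosses twice. -/
lemma IsFacet.injOn_crossing (hC : IsFacet N (w0 n) C) :
    Set.InjOn (fun j => (pLow n N C j, pHigh n N C j)) C := by
  intro x hx y hy hxy
  refine inj_on_of_surj_on_of_card_le (t := {p : Fin n × Fin n | p.1 < p.2})
    (fun j _ => (pLow n N C j, pHigh n N C j)) (fun j hj => ?_) (fun p hp => ?_) ?_ hx hy hxy
  · simpa using hC.pLow_lt_pHigh hj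
  · obtain ⟨j, hj, h⟩ := hC.exists_crossing (mem_filter.1 hp).2
    exact ⟨j, hj, Prod.ext h.1 h.2⟩
  · rw [hC.1, nInv_w0, Fintype.card_product_filter_lt, Fintype.card_fin]

lemma IsFacet.lineSwap_injOn (hC : IsFacet N (w0 n) C) : Set.InjOn (lineSwap N C) C := by
  intro x hx y hy h
  rcases (swap_eq_swap_iff (pLow_ne_pHigh x)).1 h with ⟨h₁, h₂⟩ | ⟨h₁, h₂⟩
  · exact hC.injOn_crossing hx hy (Prod.ext h₁ h₂)
  · have := hC.pLow_lt_pHigh hx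
    have := hC.pLow_lt_pHigh hy
    rw [h₁, h₂] at *
    exact absurd (lt_trans ‹_› ‹_›) (lt_irrefl _)

lemma IsFacet.exists_mem_lineSwap_eq (hC : IsFacet N (w0 n) C) (j : Fin m) :
    ∃ u ∈ C, lineSwap N C j = lineSwap N C u := by
  rcases lt_or_gt_of_ne (pLow_ne_pHigh (N := N) (C := C) j) with h | h
  · obtain ⟨u, hu, h₁, h₂⟩ := hC.exists_crossing h
    exact ⟨u, hu, by rw [lineSwap, lineSwap, h₁, h₂]⟩
  · obtain ⟨u, hu, h₁, h₂⟩ := hC.exists_crossing h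
    exact ⟨u, hu, by rw [lineSwap, lineSwap, h₁, h₂, swap_comm]⟩

/-- Since `u` is the only crossing of `a` and `b`, their relative position changes only at `u`. -/
lemma IsFacet.lt_iff_of_not_mem_Ico (hC : IsFacet N (w0 n) C) {a b : Fin n} {u : Fin m}
    (hu : u ∈ C) (hab : lineSwap N C u = swap a b) {s s' : ℕ} (hss : s ≤ s')
    (hus : ¬(s ≤ u.1 ∧ u.1 < s')) :
    statePerm n N C s a < statePerm n N C s b ↔ statePerm n N C s' a < statePerm n N C s' b := by
  have hne : a ≠ b := by
    rintro rfl
    exact pLow_ne_pHigh u (swap_eq_one_iff.1 (hab.trans (swap_self a)))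
  have key : ∀ x y, swap x y = swap a b →
      statePerm n N C s x < statePerm n N C s y → ¬statePerm n N C s' y < statePerm n N C s' x :=
    fun x y hxy h₀ h₁ => by
      obtain ⟨j, hj, h₀, h₁, hx, hy⟩ := exists_crossing_of_lt_of_lt hss h₀ h₁
      have : lineSwap N C j = lineSwap N C u := by rw [hab, lineSwap, hx, hy, hxy]
      exact hus (hC.lineSwap_injOn hj hu this ▸ ⟨h₀, h₁⟩)
  have hne' : ∀ t, statePerm n N C t a ≠ statePerm n N C t b :=
    fun t => (statePerm n N C t).injective.ne hne
  constructor
  · exact fun h => lt_of_le_of_ne (not_lt.1 (key a b rfl h)) (hne' s')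
  · intro h
    by_contra h'
    exact key b a (swap_comm b a) (lt_of_le_of_ne (not_lt.1 h') (hne' s).symm) h

end Crossings

section Flips

variable {n m : ℕ} {N : Fin m → Fin (n - 1)} {C D : Finset (Fin m)}

/-- `D` is obtained from `C` by a flip: a contact `j` and a crossing `u` of the same two lines
are exchanged. -/
def IsFlip (N : Fin m → Fin (n - 1)) (C D : Finset (Fin m)) : Prop :=
  ∃ j ∉ C, ∃ u ∈ C, lineSwap N C j = lineSwap N C u ∧ D = insert j (C.erase u)

lemma lineSwap_mul_self (j : Fin m) : lineSwap N C j * lineSwap N C j = 1 := swap_mul_self _ _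

lemma lineSwap_inv (j : Fin m) : (lineSwap N C j)⁻¹ = lineSwap N C j := swap_inv _ _

lemma statePerm_succ_eq_mul_of_statePerm_eq_mul {x : Fin m} {σ : Perm (Fin n)}
    (h : statePerm n N D x = statePerm n N C x * σ) :
    statePerm n N D (x + 1) =
      statePerm n N C (x + 1) * if x ∈ D ↔ x ∈ C then σ else lineSwap N C x * σ := by
  by_cases hD : x ∈ D <;> by_cases hC : x ∈ C <;> simp only [hD, hC, iff_self, if_true,
    iff_false, false_iff, not_true, if_false]
  · rw [statePerm_succ_of_mem hD, statePerm_succ_of_mem hC, h, mul_assoc]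
  · rw [statePerm_succ_of_mem hD, statePerm_succ_of_not_mem hC, h, ← mul_assoc,
      adjT_mul_statePerm, mul_assoc]
  · rw [statePerm_succ_of_not_mem hD, statePerm_succ_eq_mul_lineSwap hC, h, mul_assoc,
      ← mul_assoc (lineSwap N C x), lineSwap_mul_self, one_mul]
  · rw [statePerm_succ_of_not_mem hD, statePerm_succ_of_not_mem hC, h]

/-- Adding the contact `j` and removing the crossing `u` each multiply the state on the right by
the same involution, so the two arrangements differ exactly between `j` and `u`. -/
lemma statePerm_insert_erase {j u : Fin m} (hj : j ∉ C) (hu : u ∈ C)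
    (hju : lineSwap N C j = lineSwap N C u) (t : ℕ) :
    statePerm n N (insert j (C.erase u)) t =
      statePerm n N C t * if j.1 < t ↔ u.1 < t then 1 else lineSwap N C j := by
  induction t with
  | zero => simp [statePerm]
  | succ t ih =>
    have hτ := lineSwap_mul_self (N := N) (C := C) j
    rcases lt_or_ge t m with ht | ht
    · obtain ⟨x, rfl⟩ : ∃ x : Fin m, x.1 = t := ⟨⟨t, ht⟩, rfl⟩
      rw [statePerm_succ_eq_mul_of_statePerm_eq_mul ih]
      congr 1
      have huj : u ≠ j := fun h => hj (h ▸ hu)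
      by_cases hxj : x = j
      · subst hxj
        have e : u.1 < x.1 + 1 ↔ u.1 < x.1 := by have := Fin.val_ne_of_ne huj; omega
        by_cases hux : u.1 < x.1 <;> simp [hj, e, hux, hτ]
      by_cases hxu : x = u
      · subst hxu
        have e : j.1 < x.1 + 1 ↔ j.1 < x.1 := by have := Fin.val_ne_of_ne hxj; omega
        by_cases hjx : j.1 < x.1 <;> simp [hxj, hu, e, hjx, ← hju, hτ]
      · have e : (j.1 < x.1 + 1 ↔ u.1 < x.1 + 1) ↔ (j.1 < x.1 ↔ u.1 < x.1) := by
          have := Fin.val_ne_of_ne hxj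
          have := Fin.val_ne_of_ne hxu
          omega
        rw [if_pos (by simp [hxj, hxu]), if_congr e rfl rfl]
    · have e : (j.1 < t + 1 ↔ u.1 < t + 1) ↔ (j.1 < t ↔ u.1 < t) := by
        have := j.2
        have := u.2
        omega
      rw [statePerm_succ_of_le ht, statePerm_succ_of_le ht, ih, if_congr e rfl rfl]

lemma pLow_eq_of_statePerm_eq_mul {j : Fin m} {σ : Perm (Fin n)}
    (h : statePerm n N D j = statePerm n N C j * σ) : pLow n N D j = σ⁻¹ (pLow n N C j) := by
  simp only [pLow, h, mul_inv_rev, Perm.mul_apply]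

lemma pHigh_eq_of_statePerm_eq_mul {j : Fin m} {σ : Perm (Fin n)}
    (h : statePerm n N D j = statePerm n N C j * σ) : pHigh n N D j = σ⁻¹ (pHigh n N C j) := by
  simp only [pHigh, h, mul_inv_rev, Perm.mul_apply]

lemma lineSwap_eq_of_statePerm_eq_mul {j : Fin m} {σ : Perm (Fin n)}
    (h : statePerm n N D j = statePerm n N C j * σ) :
    lineSwap N D j = σ⁻¹ * lineSwap N C j * σ := by
  rw [lineSwap, lineSwap, pLow_eq_of_statePerm_eq_mul h, pHigh_eq_of_statePerm_eq_mul h,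
    swap_apply_apply, inv_inv]

lemma lineSwap_insert_erase {j u : Fin m} (hj : j ∉ C) (hu : u ∈ C)
    (hju : lineSwap N C j = lineSwap N C u) {x : Fin m} (hx : lineSwap N C x = lineSwap N C j) :
    lineSwap N (insert j (C.erase u)) x = lineSwap N C j := by
  rw [lineSwap_eq_of_statePerm_eq_mul (statePerm_insert_erase hj hu hju x), hx]
  split_ifs
  · rw [inv_one, one_mul, mul_one]
  · rw [inv_mul_cancel, one_mul]

lemma IsFlip.symm (h : IsFlip N C D) : IsFlip N D C := by
  obtain ⟨j, hj, u, hu, hju, rfl⟩ := h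
  have huj : u ≠ j := fun h => hj (h ▸ hu)
  refine ⟨u, by simp [huj], j, mem_insert_self _ _, ?_, ?_⟩
  · rw [lineSwap_insert_erase hj hu hju hju.symm, lineSwap_insert_erase hj hu hju rfl]
  · rw [erase_insert (fun h => hj (mem_of_mem_erase h)), insert_erase hu]

lemma IsFlip.isFacet {π : Perm (Fin n)} (h : IsFlip N C D) (hC : IsFacet N π C) :
    IsFacet N π D := by
  obtain ⟨j, hj, u, hu, hju, rfl⟩ := h
  refine ⟨?_, ?_⟩
  · rw [card_insert_of_notMem (fun h => hj (mem_of_mem_erase h)), card_erase_add_one hu, hC.1]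
  · rw [statePerm_insert_erase hj hu hju, if_pos (by simp [j.2, u.2]), mul_one, hC.2]

end Flips

section ContactGraph

variable {n m : ℕ} {N : Fin m → Fin (n - 1)} {C D : Finset (Fin m)}

lemma connRel_symm {a b : Fin n} (h : ConnRel n N C a b) : ConnRel n N C b a := by
  induction h with
  | refl => exact .refl
  | tail _ hst ih => exact Relation.ReflTransGen.head hst.symm ih

lemma connRel_of_arcRel_imp (h : ∀ a b, ArcRel n N D a b → ConnRel n N C a b) {a b : Fin n}
    (hab : ConnRel n N D a b) : ConnRel n N C a b :=
  Relation.ReflTransGen.lift' id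
    (fun u v huv => huv.elim (h u v) fun h' => connRel_symm (h v u h')) _ _ hab

lemma arcSrc_of_not_mem {j : Fin m} (hj : j ∉ C) : arcSrc n N C j = pHigh n N C j := by
  simp only [arcSrc, pHigh, statePerm_succ_of_not_mem hj]

lemma arcTgt_of_not_mem {j : Fin m} (hj : j ∉ C) : arcTgt n N C j = pLow n N C j := by
  simp only [arcTgt, pLow, statePerm_succ_of_not_mem hj]

lemma connRel_pHigh_pLow {j : Fin m} (hj : j ∉ C) :
    ConnRel n N C (pHigh n N C j) (pLow n N C j) :=
  .single (Or.inl ⟨j, hj, arcSrc_of_not_mem hj, arcTgt_of_not_mem hj⟩)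

lemma connRel_lineSwap_apply {j : Fin m} (hj : j ∉ C) (z : Fin n) :
    ConnRel n N C z (lineSwap N C j z) := by
  rw [lineSwap, swap_apply_def]
  split_ifs with h₁ h₂
  · exact h₁ ▸ connRel_symm (connRel_pHigh_pLow hj)
  · exact h₂ ▸ connRel_pHigh_pLow hj
  · exact .refl

/-- A flip moves the two lines of its contact only within their own component, so every arc
of the new contact graph joins lines already connected before. -/
lemma IsFlip.connRel_of_arcRel (h : IsFlip N C D) {a b : Fin n} (hab : ArcRel n N D a b) :
    ConnRel n N C a b := by
  obtain ⟨j, hj, u, hu, hju, rfl⟩ := h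
  obtain ⟨x, hx, rfl, rfl⟩ := hab
  rw [arcSrc_of_not_mem hx, arcTgt_of_not_mem hx]
  have hlines : ConnRel n N C (pHigh n N C x) (pLow n N C x) := by
    by_cases hxC : x ∈ C
    · obtain rfl : x = u := by
        by_contra h
        exact hx (mem_insert_of_mem (mem_erase.2 ⟨h, hxC⟩))
      rw [← swap_apply_left (pLow n N C x) (pHigh n N C x), ← lineSwap, ← hju]
      exact connRel_symm (connRel_lineSwap_apply hj _)
    · exact connRel_pHigh_pLow hxC
  have hx := statePerm_insert_erase hj hu hju x
  rw [pHigh_eq_of_statePerm_eq_mul hx, pLow_eq_of_statePerm_eq_mul hx]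
  split_ifs
  · simpa using hlines
  · rw [lineSwap_inv]
    exact (connRel_symm (connRel_lineSwap_apply hj _)).trans
      (hlines.trans (connRel_lineSwap_apply hj _))

lemma IsFlip.connRel_iff (h : IsFlip N C D) {a b : Fin n} :
    ConnRel n N D a b ↔ ConnRel n N C a b :=
  ⟨connRel_of_arcRel_imp fun _ _ => h.connRel_of_arcRel,
    connRel_of_arcRel_imp fun _ _ => h.symm.connRel_of_arcRel⟩

end ContactGraph

section BrickVectors

variable {n m : ℕ} {N : Fin m → Fin (n - 1)} {C D : Finset (Fin m)}

def bricksBelow (N : Fin m → Fin (n - 1)) (C : Finset (Fin m)) (i : Fin n) : Finset (Fin m) :=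
  univ.filter fun j => IsBrick N j ∧ Above n N C i j

lemma brickVector_apply (i : Fin n) : brickVector n N C i = #(bricksBelow N C i) := rfl

lemma card_bricksBelow_of_window {W : Finset (Fin m)} {σ : Perm (Fin n)}
    (h : ∀ j : Fin m, statePerm n N D (j + 1) = statePerm n N C (j + 1) * if j ∈ W then σ else 1)
    (i : Fin n) :
    #(bricksBelow N D i) = #(bricksBelow N C i \ W) + #(bricksBelow N C (σ i) ∩ W) := by
  rw [← card_sdiff_add_card_inter (bricksBelow N D i) W]
  congr 2 <;> ext j <;> by_cases hj : j ∈ W <;>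
    simp only [bricksBelow, mem_sdiff, mem_inter, mem_filter, mem_univ, true_and, hj] <;>
    simp [Above, h j, hj]

def flipWindow (j u : Fin m) : Finset (Fin m) := univ.filter fun x => ¬(j ≤ x ↔ u ≤ x)

lemma mem_flipWindow {j u x : Fin m} : x ∈ flipWindow j u ↔ ¬(j.1 < x.1 + 1 ↔ u.1 < x.1 + 1) := by
  simp only [flipWindow, mem_filter, mem_univ, true_and, Fin.le_def]
  omega

lemma flipWindow_of_lt {j u : Fin m} (h : u < j) : flipWindow j u = Ico u j := by
  ext x
  simp only [mem_flipWindow, mem_Ico, Fin.le_def, Fin.lt_def]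
  have := Fin.lt_def.1 h
  omega

lemma flipWindow_of_gt {j u : Fin m} (h : j < u) : flipWindow j u = Ico j u := by
  ext x
  simp only [mem_flipWindow, mem_Ico, Fin.le_def, Fin.lt_def]
  have := Fin.lt_def.1 h
  omega

/-- Inside the window of a flip the two lines of the contact `j` swap their paths, so each
gains the bricks the other had below it there. -/
lemma brickVector_insert_erase {j u : Fin m} (hj : j ∉ C) (hu : u ∈ C)
    (hju : lineSwap N C j = lineSwap N C u) :
    brickVector n N (insert j (C.erase u)) - brickVector n N C =
      ((#(bricksBelow N C (pHigh n N C j) ∩ flipWindow j u) : ℝ) -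
          #(bricksBelow N C (pLow n N C j) ∩ flipWindow j u)) •
        (Pi.single (pLow n N C j) 1 - Pi.single (pHigh n N C j) 1) := by
  have hD := card_bricksBelow_of_window (N := N) (C := C) (D := insert j (C.erase u))
    (W := flipWindow j u) (σ := lineSwap N C j) fun x => by
      simp only [statePerm_insert_erase hj hu hju, mem_flipWindow, ite_not]
  have hC i := card_sdiff_add_card_inter (bricksBelow N C i) (flipWindow j u)
  have hne := pLow_ne_pHigh (N := N) (C := C) j
  ext i
  simp only [Pi.sub_apply, Pi.smul_apply, brickVector_apply, hD, ← hC i, smul_eq_mul,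
    Pi.single_apply]
  push_cast
  by_cases h₁ : i = pLow n N C j
  · subst h₁
    simp [lineSwap, hne]
  by_cases h₂ : i = pHigh n N C j
  · subst h₂
    simp [lineSwap, hne.symm]
  · simp [lineSwap, swap_apply_of_ne_of_ne h₁ h₂, h₁, h₂]

/-- On a facet of `w0`, the window of a flip lies between the crossing and the contact of its
two lines, so there the line `b` of the contact stays below the line `a`; the commutator
starting the window is a brick between them. -/
lemma IsFacet.card_bricksBelow_inter_lt (hC : IsFacet N (w0 n) C) {a b : Fin n}
    {u lo hi : Fin m} (hu : u ∈ C) (hab : lineSwap N C u = swap b a) (hlt : lo < hi)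
    (hulo : u = lo ∨ u = hi)
    (hb₀ : statePerm n N C (lo + 1) b = lowLevel (N lo))
    (ha₀ : statePerm n N C (lo + 1) a = highLevel (N lo))
    (hb₁ : statePerm n N C hi b = lowLevel (N hi)) (ha₁ : statePerm n N C hi a = highLevel (N hi)) :
    #(bricksBelow N C b ∩ Ico lo hi) < #(bricksBelow N C a ∩ Ico lo hi) := by
  have hord : ∀ x : Fin m, lo ≤ x → x < hi →
      statePerm n N C (x + 1) b < statePerm n N C (x + 1) a := by
    intro x h₀ h₁
    refine (hC.lt_iff_of_not_mem_Ico hu hab (Nat.succ_le_succ h₀) ?_).1 ?_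
    · have := Fin.le_def.1 h₀
      have := Fin.lt_def.1 h₁
      rcases hulo with rfl | rfl <;> omega
    · simp [Fin.lt_def, hb₀, ha₀]
  refine card_lt_card ((ssubset_iff_of_subset fun x hx => ?_).2 ⟨lo, ?_, ?_⟩)
  · simp only [bricksBelow, mem_inter, mem_filter, mem_univ, true_and, mem_Ico] at hx ⊢
    unfold Above at hx ⊢
    have := Fin.lt_def.1 (hord x hx.2.1 hx.2.2)
    exact ⟨⟨hx.1.1, by omega⟩, hx.2⟩
  · simp only [bricksBelow, mem_inter, mem_filter, mem_univ, true_and, mem_Ico]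
    simp [Above, isBrick_of_statePerm_eq hlt hb₀ ha₀ hb₁ ha₁, ha₀, hlt]
  · simp only [bricksBelow, mem_inter, mem_filter, mem_univ, true_and]
    simp [Above, hb₀]

lemma IsFacet.card_bricksBelow_inter_flipWindow_lt (hC : IsFacet N (w0 n) C) {j u : Fin m}
    (hj : j ∉ C) (hu : u ∈ C) (hju : lineSwap N C j = lineSwap N C u) :
    #(bricksBelow N C (pLow n N C j) ∩ flipWindow j u) <
      #(bricksBelow N C (pHigh n N C j) ∩ flipWindow j u) := by
  set a := pHigh n N C j
  set b := pLow n N C j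
  have hab : lineSwap N C u = swap b a := hju.symm
  have hcases := (swap_eq_swap_iff (pLow_ne_pHigh u)).1 hab
  have hb : statePerm n N C j b = lowLevel (N j) := statePerm_apply_pLow j
  have ha : statePerm n N C j a = highLevel (N j) := statePerm_apply_pHigh j
  have hba : statePerm n N C j b < statePerm n N C j a := by simp [Fin.lt_def, hb, ha]
  have huj : u ≠ j := fun h => hj (h ▸ hu)
  rcases lt_or_gt_of_ne huj with h | h
  · have hord := (hC.lt_iff_of_not_mem_Ico hu hab (Nat.succ_le_of_lt h) (by omega)).2 hba
    rcases hcases with ⟨hl, hh⟩ | ⟨hl, hh⟩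
    · rw [← hl, ← hh, statePerm_succ_apply_pLow hu, statePerm_succ_apply_pHigh hu] at hord
      simp [Fin.lt_def] at hord
    rw [flipWindow_of_lt h]
    refine hC.card_bricksBelow_inter_lt hu hab h (Or.inl rfl) ?_ ?_ hb ha
    · rw [← hh, statePerm_succ_apply_pHigh hu]
    · rw [← hl, statePerm_succ_apply_pLow hu]
  · rw [← statePerm_succ_of_not_mem hj] at hb ha hba
    have hord := (hC.lt_iff_of_not_mem_Ico hu hab (Nat.succ_le_of_lt h) (by omega)).1 hba
    rcases hcases with ⟨hl, hh⟩ | ⟨hl, hh⟩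
    · rw [flipWindow_of_gt h]
      refine hC.card_bricksBelow_inter_lt hu hab h (Or.inr rfl) hb ha ?_ ?_
      · rw [← hl, statePerm_apply_pLow]
      · rw [← hh, statePerm_apply_pHigh]
    · rw [← hl, ← hh, statePerm_apply_pLow, statePerm_apply_pHigh] at hord
      simp [Fin.lt_def] at hord

end BrickVectors

section FlipGraph

variable {n m : ℕ}

lemma map_dropLast_union (C : Finset (Fin (m + 1))) :
    (dropLast C).map Fin.castSuccEmb ∪ C.filter (· = Fin.last m) = C := by
  ext x
  cases x using Fin.lastCases <;> simp [Fin.castSucc_ne_last]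

lemma card_dropLast (C : Finset (Fin (m + 1))) : #(dropLast C) = #(C.erase (Fin.last m)) := by
  rw [← card_map Fin.castSuccEmb]
  congr 1
  ext x
  cases x using Fin.lastCases <;> simp [Fin.castSucc_ne_last]

lemma lineSwap_castSucc {N : Fin (m + 1) → Fin (n - 1)} {C : Finset (Fin (m + 1))}
    {E : Finset (Fin m)} (hEC : ∀ j, j ∈ E ↔ Fin.castSucc j ∈ C) (j : Fin m) :
    lineSwap (N ∘ Fin.castSucc) E j = lineSwap N C (Fin.castSucc j) := by
  simp only [lineSwap, pLow, pHigh, statePerm_castSucc hEC j j.2.le]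
  rfl

lemma IsFlip.castSucc {N : Fin (m + 1) → Fin (n - 1)} {C D : Finset (Fin (m + 1))}
    {E F : Finset (Fin m)} (h : IsFlip (N ∘ Fin.castSucc) E F)
    (hEC : ∀ j, j ∈ E ↔ Fin.castSucc j ∈ C) (hFD : ∀ j, j ∈ F ↔ Fin.castSucc j ∈ D)
    (hlast : Fin.last m ∈ C ↔ Fin.last m ∈ D) : IsFlip N C D := by
  obtain ⟨j, hj, u, hu, hju, rfl⟩ := h
  refine ⟨_, (hEC j).not.1 hj, _, (hEC u).1 hu, ?_, ?_⟩
  · rw [← lineSwap_castSucc hEC, ← lineSwap_castSucc hEC, hju]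
  · ext x
    cases x using Fin.lastCases with
    | last => simp [← hlast, (Fin.castSucc_ne_last _).symm]
    | cast y => simp [← hFD, ← hEC, Fin.castSucc_inj]

lemma reflTransGen_isFlip_castSucc {N : Fin (m + 1) → Fin (n - 1)} (T : Finset (Fin (m + 1)))
    (hT : ∀ x ∈ T, x = Fin.last m) {E F : Finset (Fin m)}
    (h : Relation.ReflTransGen (IsFlip (N ∘ Fin.castSucc)) E F) :
    Relation.ReflTransGen (IsFlip N) (E.map Fin.castSuccEmb ∪ T) (F.map Fin.castSuccEmb ∪ T) := by
  have hmem : ∀ (E : Finset (Fin m)) j, j ∈ E ↔ Fin.castSucc j ∈ E.map Fin.castSuccEmb ∪ T :=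
    fun E j => by
      rw [mem_union, ← Fin.coe_castSuccEmb, mem_map' Fin.castSuccEmb]
      exact ⟨Or.inl, fun h => h.resolve_right fun h' => Fin.castSucc_ne_last j (hT _ h')⟩
  exact Relation.ReflTransGen.lift (fun E => E.map Fin.castSuccEmb ∪ T)
    (fun E F hEF => hEF.castSucc (hmem E) (hmem F) (by simp [Fin.castSucc_ne_last])) _ _ h

variable {N : Fin (m + 1) → Fin (n - 1)} {C : Finset (Fin (m + 1))} {π : Perm (Fin n)}

lemma IsFacet.dropLast_of_last_not_mem (hC : IsFacet N π C) (hl : Fin.last m ∉ C) :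
    IsFacet (N ∘ Fin.castSucc) π (dropLast C) := by
  refine ⟨by rw [card_dropLast, erase_eq_of_notMem hl, hC.1], ?_⟩
  have h := statePerm_succ_of_not_mem (N := N) hl
  simp only [Fin.val_last] at h
  rw [statePerm_dropLast m le_rfl, ← hC.2, h]

lemma IsFacet.statePerm_of_last_mem (hC : IsFacet N π C) (hl : Fin.last m ∈ C) :
    statePerm n N C m = adjT n (N (Fin.last m)) * π := by
  have h := statePerm_succ_of_mem (N := N) hl
  simp only [Fin.val_last] at h
  rw [← hC.2, h, ← mul_assoc, adjT_mul_self, one_mul]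

lemma IsFacet.nInv_adjT_mul_of_last_mem (hC : IsFacet N π C) (hl : Fin.last m ∈ C) :
    nInv (adjT n (N (Fin.last m)) * π) + 1 = nInv π := by
  have hle := nInv_statePerm_le_card (N := N ∘ Fin.castSucc) (C := dropLast C)
  rw [statePerm_dropLast m le_rfl, hC.statePerm_of_last_mem hl, card_dropLast] at hle
  have := card_erase_add_one hl
  have := hC.1
  rcases nInv_adjT_mul_cases (N (Fin.last m)) π with h | h <;> omega

lemma IsFacet.dropLast_of_last_mem (hC : IsFacet N π C) (hl : Fin.last m ∈ C) :
    IsFacet (N ∘ Fin.castSucc) (adjT n (N (Fin.last m)) * π) (dropLast C) := by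
  refine ⟨?_, by rw [statePerm_dropLast m le_rfl, hC.statePerm_of_last_mem hl]⟩
  have := card_erase_add_one hl
  have := hC.nInv_adjT_mul_of_last_mem hl
  have := hC.1
  rw [card_dropLast]
  omega

/-- The two lines exchanged by the last letter, a descent of `π`, cross somewhere in `C`, and
that crossing can be flipped onto the last letter. -/
lemma IsFacet.exists_isFlip_last_mem (hC : IsFacet N π C) (hl : Fin.last m ∉ C)
    (hlen : nInv (adjT n (N (Fin.last m)) * π) + 1 = nInv π) :
    ∃ D, Fin.last m ∈ D ∧ IsFlip N C D := by
  set x := π⁻¹ (highLevel (N (Fin.last m)))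
  set y := π⁻¹ (lowLevel (N (Fin.last m)))
  have hxy : x < y := by
    refine lt_of_le_of_ne (not_lt.1 fun h => ?_) (π⁻¹.injective.ne (lowLevel_ne_highLevel _).symm)
    have := nInv_adjT_mul_of_lt h
    omega
  obtain ⟨u, hu, -, -, hux, huy⟩ :=
    exists_crossing_of_lt_of_lt (N := N) (C := C) (Nat.zero_le (m + 1))
    (by simpa [statePerm] using hxy) (by simp [hC.2, x, y, Fin.lt_def])
  have hπ : statePerm n N C (Fin.last m) = π := by
    have h := statePerm_succ_of_not_mem (N := N) hl
    simp only [Fin.val_last] at h ⊢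
    rw [← hC.2, h]
  refine ⟨insert (Fin.last m) (C.erase u), mem_insert_self _ _, _, hl, u, hu, ?_, rfl⟩
  rw [lineSwap, lineSwap, hux, huy, swap_comm, pLow, pHigh, hπ]
  rfl

theorem IsFacet.reflTransGen_isFlip :
    ∀ {m : ℕ} {N : Fin m → Fin (n - 1)} {π : Perm (Fin n)} {C D : Finset (Fin m)},
      IsFacet N π C → IsFacet N π D → Relation.ReflTransGen (IsFlip N) C D
  | 0, _, _, C, D, _, _ => by rw [C.eq_empty_of_isEmpty, D.eq_empty_of_isEmpty]
  | m + 1, N, π, C, D, hC, hD => by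
    have hsame : ∀ {C D}, IsFacet N π C → IsFacet N π D → (Fin.last m ∈ C ↔ Fin.last m ∈ D) →
        Relation.ReflTransGen (IsFlip N) C D := by
      intro C D hC hD hCD
      obtain ⟨π', hC', hD'⟩ : ∃ π', IsFacet (N ∘ Fin.castSucc) π' (dropLast C) ∧
          IsFacet (N ∘ Fin.castSucc) π' (dropLast D) := by
        by_cases hl : Fin.last m ∈ C
        · exact ⟨_, hC.dropLast_of_last_mem hl, hD.dropLast_of_last_mem (hCD.1 hl)⟩
        · exact ⟨_, hC.dropLast_of_last_not_mem hl, hD.dropLast_of_last_not_mem (hCD.not.1 hl)⟩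
      have hT : D.filter (· = Fin.last m) = C.filter (· = Fin.last m) := by
        ext x
        simp only [mem_filter]
        constructor <;> rintro ⟨hx, rfl⟩
        exacts [⟨hCD.2 hx, rfl⟩, ⟨hCD.1 hx, rfl⟩]
      have := reflTransGen_isFlip_castSucc (C.filter (· = Fin.last m)) (by simp)
        (IsFacet.reflTransGen_isFlip hC' hD')
      rwa [map_dropLast_union, ← hT, map_dropLast_union] at this
    by_cases hlC : Fin.last m ∈ C <;> by_cases hlD : Fin.last m ∈ D
    · exact hsame hC hD (iff_of_true hlC hlD)
    · obtain ⟨D', hlD', hDD'⟩ := hD.exists_isFlip_last_mem hlD (hC.nInv_adjT_mul_of_last_mem hlC)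
      exact (hsame hC (hDD'.isFacet hD) (iff_of_true hlC hlD')).tail hDD'.symm
    · obtain ⟨C', hlC', hCC'⟩ := hC.exists_isFlip_last_mem hlC (hD.nInv_adjT_mul_of_last_mem hlD)
      exact .head hCC' (hsame (hCC'.isFacet hC) hD (iff_of_true hlC' hlD))
    · exact hsame hC hD (iff_of_false hlC hlD)

end FlipGraph

section Dimension

variable {ι β K : Type*} [DecidableEq ι] [Field K]

lemma linearIndependent_single_sub_single_of_idempotent {rep : ι → ι}
    (hrep : ∀ i, rep (rep i) = rep i) :
    LinearIndependent K fun i : {i // rep i ≠ i} =>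
      (Pi.single i.1 1 - Pi.single (rep i.1) 1 : ι → K) := by
  refine LinearIndependent.of_comp
    (LinearMap.funLeft K K (Subtype.val : {i // rep i ≠ i} → ι)) ?_
  convert Pi.linearIndependent_single_one {i // rep i ≠ i} K with i
  funext t
  have ht : t.1 ≠ rep i.1 := fun h => t.2 (by rw [h, hrep])
  simp only [Function.comp_apply, LinearMap.funLeft_apply, Pi.sub_apply, Pi.single_apply,
    if_neg ht, sub_zero, Subtype.ext_iff]

/-- Choosing a representative `rep i` in every fibre of `f`, the vectors `eᵢ - e_{rep i}` for
the non-representatives `i` form a basis of the span. -/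
theorem finrank_span_single_sub_single_of_eq [Fintype ι] (f : ι → β) :
    Module.finrank K (Submodule.span K
        {x : ι → K | ∃ u v, f u = f v ∧ x = Pi.single u 1 - Pi.single v 1}) =
      Fintype.card ι - (Set.range f).ncard := by
  set rep : ι → ι := fun i => Set.rangeSplitting f (Set.rangeFactorization f i)
  have hfrep : ∀ i, f (rep i) = f i := fun i => Set.apply_rangeSplitting f _
  have hrep : ∀ {u v}, f u = f v → rep u = rep v := fun h => by
    simp only [rep, Set.rangeFactorization, h]
  have hmem : ∀ w, (Pi.single w 1 - Pi.single (rep w) 1 : ι → K) ∈ Submodule.span K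
      (Set.range fun i : {i // rep i ≠ i} => Pi.single i.1 1 - Pi.single (rep i.1) 1) := by
    intro w
    by_cases hw : rep w = w
    · simp [hw]
    · exact Submodule.subset_span ⟨⟨w, hw⟩, rfl⟩
  have hspan : Submodule.span K
      (Set.range fun i : {i // rep i ≠ i} => (Pi.single i.1 1 - Pi.single (rep i.1) 1 : ι → K)) =
      Submodule.span K {x : ι → K | ∃ u v, f u = f v ∧ x = Pi.single u 1 - Pi.single v 1} := by
    refine le_antisymm
      (Submodule.span_mono (Set.range_subset_iff.2 fun i => ⟨i, rep i, (hfrep i).symm, rfl⟩))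
      (Submodule.span_le.2 ?_)
    rintro _ ⟨u, v, huv, rfl⟩
    rw [show (Pi.single u 1 - Pi.single v 1 : ι → K) =
        (Pi.single u 1 - Pi.single (rep u) 1) - (Pi.single v 1 - Pi.single (rep v) 1) by
      rw [hrep huv]; abel]
    exact sub_mem (hmem u) (hmem v)
  have hfix : {i | rep i = i}.ncard = (Set.range f).ncard :=
    Set.ncard_congr (fun i _ => f i) (fun i _ => ⟨i, rfl⟩)
      (fun i j hi hj hij => by rw [← Set.mem_ofPred.1 hi, ← Set.mem_ofPred.1 hj, hrep hij])
      (fun _ ⟨i, hi⟩ => ⟨rep i, hrep (hfrep i), by rw [hfrep, hi]⟩)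
  have hsplit := Fintype.card_subtype_compl (fun i => rep i = i)
  rw [← hspan, finrank_span_eq_card (linearIndependent_single_sub_single_of_idempotent
    fun i => hrep (hfrep i)), ← hfix, Set.ncard_eq_toFinset_card', Set.toFinset_ofPred]
  simp only [Fintype.card_subtype] at hsplit ⊢
  omega

end Dimension

section BrickPolytope

variable {n m : ℕ} {N : Fin m → Fin (n - 1)} {C D : Finset (Fin m)}

def brickVectors (n : ℕ) (N : Fin m → Fin (n - 1)) : Set (Fin n → ℝ) :=
  {x | ∃ C, IsArr n N C ∧ brickVector n N C = x}

lemma brickPolytope_eq_convexHull : brickPolytope n N = convexHull ℝ (brickVectors n N) := rfl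

lemma brickVector_mem_brickVectors (hC : IsArr n N C) : brickVector n N C ∈ brickVectors n N :=
  ⟨C, hC, rfl⟩

lemma IsFlip.exists_brickVector_sub (h : IsFlip N C D) :
    ∃ a b, ConnRel n N C a b ∧ ∃ c : ℝ,
      brickVector n N D - brickVector n N C = c • (Pi.single a 1 - Pi.single b 1) := by
  obtain ⟨j, hj, u, hu, hju, rfl⟩ := h
  exact ⟨_, _, connRel_symm (connRel_pHigh_pLow hj), _, brickVector_insert_erase hj hu hju⟩

lemma connRel_iff_of_reflTransGen_isFlip (h : Relation.ReflTransGen (IsFlip N) C D)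
    {a b : Fin n} : ConnRel n N D a b ↔ ConnRel n N C a b := by
  induction h with
  | refl => rfl
  | tail _ hXY ih => exact hXY.connRel_iff.trans ih

lemma brickVector_sub_mem_span_of_reflTransGen_isFlip (h : Relation.ReflTransGen (IsFlip N) C D) :
    brickVector n N D - brickVector n N C ∈ Submodule.span ℝ
      {x | ∃ u v, ConnRel n N C u v ∧ x = Pi.single u 1 - Pi.single v 1} := by
  induction h with
  | refl => simp
  | @tail X Y hCX hXY ih =>
    obtain ⟨a, b, hab, c, hc⟩ := hXY.exists_brickVector_sub
    rw [← sub_add_sub_cancel _ (brickVector n N X), hc]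
    exact add_mem (Submodule.smul_mem _ _ (Submodule.subset_span
      ⟨a, b, (connRel_iff_of_reflTransGen_isFlip hCX).1 hab, rfl⟩)) ih

lemma IsFacet.single_sub_single_mem_vectorSpan (hC : IsFacet N (w0 n) C) {j : Fin m}
    (hj : j ∉ C) :
    Pi.single (pLow n N C j) 1 - Pi.single (pHigh n N C j) 1 ∈
      vectorSpan ℝ (brickVectors n N) := by
  obtain ⟨u, hu, hju⟩ := hC.exists_mem_lineSwap_eq j
  have hflip : IsFlip N C (insert j (C.erase u)) := ⟨j, hj, u, hu, hju, rfl⟩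
  have hmem := vsub_mem_vectorSpan ℝ
    (brickVector_mem_brickVectors (isArr_iff_isFacet.2 (hflip.isFacet hC)))
    (brickVector_mem_brickVectors (isArr_iff_isFacet.2 hC))
  rw [vsub_eq_sub, brickVector_insert_erase hj hu hju] at hmem
  have hpos := hC.card_bricksBelow_inter_flipWindow_lt hj hu hju
  refine (Submodule.smul_mem_iff _ ?_).1 hmem
  rw [sub_ne_zero]
  exact_mod_cast hpos.ne'

lemma single_sub_single_mem_vectorSpan_of_connRel {C₀ : Finset (Fin m)} (h₀ : IsArr n N C₀)
    {a b : Fin n} (hab : ConnRel n N C₀ a b) :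
    Pi.single a 1 - Pi.single b 1 ∈ vectorSpan ℝ (brickVectors n N) := by
  have harc : ∀ {x y}, ArcRel n N C₀ x y →
      Pi.single y 1 - Pi.single x 1 ∈ vectorSpan ℝ (brickVectors n N) := by
    rintro _ _ ⟨j, hj, rfl, rfl⟩
    rw [arcSrc_of_not_mem hj, arcTgt_of_not_mem hj]
    exact (isArr_iff_isFacet.1 h₀).single_sub_single_mem_vectorSpan hj
  induction hab with
  | refl => simp
  | @tail x y _ hxy ih =>
    rw [← sub_add_sub_cancel _ (Pi.single x 1)]
    refine add_mem ih ?_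
    rcases hxy with h | h
    · simpa using neg_mem (harc h)
    · exact harc h

lemma vectorSpan_brickVectors {C₀ : Finset (Fin m)} (h₀ : IsArr n N C₀) :
    vectorSpan ℝ (brickVectors n N) =
      Submodule.span ℝ {x | ∃ u v, ConnRel n N C₀ u v ∧ x = Pi.single u 1 - Pi.single v 1} := by
  apply le_antisymm
  · rw [vectorSpan_eq_span_vsub_set_right ℝ (brickVector_mem_brickVectors h₀), Submodule.span_le]
    rintro _ ⟨_, ⟨C, hC, rfl⟩, rfl⟩
    exact brickVector_sub_mem_span_of_reflTransGen_isFlip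
      ((isArr_iff_isFacet.1 h₀).reflTransGen_isFlip (isArr_iff_isFacet.1 hC))
  · rw [Submodule.span_le]
    rintro _ ⟨u, v, huv, rfl⟩
    exact single_sub_single_mem_vectorSpan_of_connRel h₀ huv

lemma filter_connRel_eq_iff {C₀ : Finset (Fin m)} {u v : Fin n} :
    univ.filter (ConnRel n N C₀ u) = univ.filter (ConnRel n N C₀ v) ↔ ConnRel n N C₀ u v := by
  refine ⟨fun h => ?_, fun h => ?_⟩
  · have : v ∈ univ.filter (ConnRel n N C₀ u) := h ▸ by simpa using .refl
    simpa using this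
  · ext w
    simp only [mem_filter, mem_univ, true_and]
    exact ⟨(connRel_symm h).trans, h.trans⟩

lemma setOf_isComp_eq_range (C₀ : Finset (Fin m)) :
    {U | IsComp n N C₀ U} = Set.range fun a => univ.filter (ConnRel n N C₀ a) := by
  ext U
  simp [IsComp, eq_comm]

lemma dimOf_brickPolytope {C₀ : Finset (Fin m)} (h₀ : IsArr n N C₀) :
    dimOf (brickPolytope n N) = n - {U | IsComp n N C₀ U}.ncard := by
  have hset : {x : Fin n → ℝ | ∃ u v, ConnRel n N C₀ u v ∧ x = Pi.single u 1 - Pi.single v 1} =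
      {x | ∃ u v, univ.filter (ConnRel n N C₀ u) = univ.filter (ConnRel n N C₀ v) ∧
        x = Pi.single u 1 - Pi.single v 1} := by
    simp only [filter_connRel_eq_iff]
  rw [dimOf, brickPolytope_eq_convexHull, affineSpan_convexHull, direction_affineSpan,
    vectorSpan_brickVectors h₀, hset, finrank_span_single_sub_single_of_eq, Fintype.card_fin,
    setOf_isComp_eq_range]

lemma ncard_setOf_isComp_of_irreducible (hn : 0 < n) (hN : Irreducible n N)
    {C₀ : Finset (Fin m)} (h₀ : IsArr n N C₀) : {U | IsComp n N C₀ U}.ncard = 1 := by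
  have : Nonempty (Fin n) := ⟨⟨0, hn⟩⟩
  have hone : (fun a => univ.filter (ConnRel n N C₀ a)) = fun _ => univ :=
    funext fun a => filter_true_of_mem fun b _ => hN C₀ h₀ a b
  rw [setOf_isComp_eq_range, hone, Set.range_const, Set.ncard_singleton]

end BrickPolytope

/-- The brick polytope of an irreducible sorting network with `n` levels has
dimension `n - 1`.  More generally, the brick polytope of a sorting network with `n` levels
and `p` irreducible components has dimension `n - p`. -/
theorem brickPolytope_dim (n m : ℕ) (N : Fin m → Fin (n - 1))
    (C₀ : Finset (Fin m)) (h₀ : IsArr n N C₀) :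
    (Irreducible n N → dimOf (brickPolytope n N) = n - 1) ∧
    dimOf (brickPolytope n N) = n - {U : Finset (Fin n) | IsComp n N C₀ U}.ncard := by
  refine ⟨fun hN => ?_, dimOf_brickPolytope h₀⟩
  rcases n.eq_zero_or_pos with rfl | hn
  · simp [dimOf_brickPolytope h₀]
  · rw [dimOf_brickPolytope h₀, ncard_setOf_isComp_of_irreducible hn hN h₀]

end BrickP
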